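/- Fix an integer k ≥ 2, let φ_k^min = arccos(1 − (2 − 2cos(π/(2k+1)))/(1 − cos(π/(2k−1)))), and let λ₁ = sin²(π/(4k−2)) be the right endpoint of Λ_k. Then the function φ ↦ P_k^φ(λ₁) is strictly decreasing on (φ_k^min, π], and P_k^φ(λ₁) tends to 1 as φ tends to φ_k^min from the right. -/

import Mathlib

/-!
Write `x = cos δ = 1 - λ(1 - cos φ)`. Since `sin²θ = λ` and `cos φ = 1 - (1 - x)/λ`, the
defining formula collapses to `P_k^φ(λ) = 1 - (1 - λ)(1 + cos((2k+1)δ))/(1 + cos δ)`, and by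
the half-angle formula the last ratio is `cos²((2k+1)δ/2)/cos²(δ/2)`. For
`λ = λ₁ = sin²(b/2)` with `b = π/(2k-1)`, the phase `φ ↦ δ` increases from
`δ(φ_k^min) = π/(2k+1)` to `δ(π) = b`. On `[π/(2k+1), b]` the numerator `cos²((2k+1)δ/2)`
increases from `0` (its argument runs through `[π/2, π]`) while the denominator decreases, so `P`
decreases in `φ`, and it tends to `1 - (1 - λ₁)·0 = 1` at `φ_k^min`.
-/

/-- The success probability `P_k^φ(λ)` of the matched-phase Grover algorithm after
`k` iterations: `P_k^φ(λ) = A·cos((2k+1)δ) + B` where `θ = arcsin √λ`,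
`δ = arccos (1 − λ(1 − cos φ))`, `A = (sin²θ/sin²δ)(cos φ − cos δ)` and
`B = (sin²θ/sin²δ)(1 − cos φ·cos δ)`. -/
noncomputable def grovP (k : ℕ) (φ lam : ℝ) : ℝ :=
  let θ : ℝ := Real.arcsin (Real.sqrt lam)
  let δ : ℝ := Real.arccos (1 - lam * (1 - Real.cos φ))
  let A : ℝ := Real.sin θ ^ 2 / Real.sin δ ^ 2 * (Real.cos φ - Real.cos δ)
  let B : ℝ := Real.sin θ ^ 2 / Real.sin δ ^ 2 * (1 - Real.cos φ * Real.cos δ)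
  A * Real.cos ((2 * (k : ℝ) + 1) * δ) + B

/-- `φ_k^min = arccos(1 − (2 − 2cos(π/(2k+1)))/(1 − cos(π/(2k−1))))`. -/
noncomputable def phiMin (k : ℕ) : ℝ :=
  Real.arccos (1 - (2 - 2 * Real.cos (Real.pi / (2 * (k : ℝ) + 1))) /
    (1 - Real.cos (Real.pi / (2 * (k : ℝ) - 1))))

open Real Set Filter Topology

theorem Real.one_add_cos_eq_two_mul_cos_sq_half (x : ℝ) : 1 + cos x = 2 * cos (x / 2) ^ 2 := by
  rw [cos_sq (x / 2), mul_div_cancel₀ x two_ne_zero]; ring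

theorem Real.one_sub_cos_eq_two_mul_sin_sq_half (x : ℝ) : 1 - cos x = 2 * sin (x / 2) ^ 2 := by
  linarith [one_add_cos_eq_two_mul_cos_sq_half x, sin_sq_add_cos_sq (x / 2)]

theorem Real.sin_sq_half_mem_Ioo {x : ℝ} (hx₀ : 0 < x) (hxπ : x < π) :
    sin (x / 2) ^ 2 ∈ Ioo 0 1 := by
  have hsin := sin_pos_of_pos_of_lt_pi (x := x / 2) (by linarith) (by linarith)
  have hcos := cos_pos_of_mem_Ioo (x := x / 2) ⟨by linarith, by linarith⟩
  constructor
  · positivity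
  · nlinarith [sin_sq_add_cos_sq (x / 2)]

namespace Grover

noncomputable def grovDelta (lam φ : ℝ) : ℝ :=
  arccos (1 - lam * (1 - cos φ))

noncomputable def grovRatio (k : ℕ) (δ : ℝ) : ℝ :=
  (1 + cos ((2 * (k : ℝ) + 1) * δ)) / (1 + cos δ)

section Delta

variable {lam : ℝ}

theorem continuous_grovDelta : Continuous (grovDelta lam) := by
  unfold grovDelta
  fun_prop

theorem one_sub_mul_one_sub_cos_mem_Icc (h0 : 0 ≤ lam) (h1 : lam ≤ 1) (φ : ℝ) :
    1 - lam * (1 - cos φ) ∈ Icc (-1) 1 := by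
  have := neg_one_le_cos φ
  have := cos_le_one φ
  constructor <;> nlinarith

theorem cos_grovDelta (h0 : 0 ≤ lam) (h1 : lam ≤ 1) (φ : ℝ) :
    cos (grovDelta lam φ) = 1 - lam * (1 - cos φ) :=
  cos_arccos (one_sub_mul_one_sub_cos_mem_Icc h0 h1 φ).1
    (one_sub_mul_one_sub_cos_mem_Icc h0 h1 φ).2

theorem neg_one_lt_cos_grovDelta (h0 : 0 ≤ lam) (h1 : lam < 1) (φ : ℝ) :
    -1 < cos (grovDelta lam φ) := by
  rw [cos_grovDelta h0 h1.le]
  nlinarith [neg_one_le_cos φ, cos_le_one φ]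

theorem grovDelta_strictMonoOn (h0 : 0 < lam) (h1 : lam ≤ 1) :
    StrictMonoOn (grovDelta lam) (Icc 0 π) := by
  intro φ₁ hφ₁ φ₂ hφ₂ hlt
  have hcos : cos φ₂ < cos φ₁ := strictAntiOn_cos hφ₁ hφ₂ hlt
  exact strictAntiOn_arccos (one_sub_mul_one_sub_cos_mem_Icc h0.le h1 φ₂)
    (one_sub_mul_one_sub_cos_mem_Icc h0.le h1 φ₁) (by nlinarith)

theorem grovDelta_sin_sq_half_pi {b : ℝ} (hb₀ : 0 ≤ b) (hbπ : b ≤ π) :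
    grovDelta (sin (b / 2) ^ 2) π = b := by
  rw [grovDelta, cos_pi, show 1 - sin (b / 2) ^ 2 * (1 - -1) = cos b by
    linarith [one_sub_cos_eq_two_mul_sin_sq_half b], arccos_cos hb₀ hbπ]

theorem grovDelta_arccos {a : ℝ} (h0 : 0 < lam) (ha₀ : 0 ≤ a) (haπ : a ≤ π)
    (ha : 1 - cos a ≤ 2 * lam) :
    grovDelta lam (arccos (1 - (1 - cos a) / lam)) = a := by
  have hq : (1 - cos a) / lam ≤ 2 := (div_le_iff₀ h0).2 (by linarith)
  have hq₀ : 0 ≤ (1 - cos a) / lam := div_nonneg (by linarith [cos_le_one a]) h0.le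
  rw [grovDelta, cos_arccos (by linarith) (by linarith), sub_sub_cancel,
    mul_div_cancel₀ _ h0.ne', sub_sub_cancel, arccos_cos ha₀ haπ]

end Delta

section Ratio

variable {k : ℕ}

theorem grovRatio_eq (δ : ℝ) :
    grovRatio k δ = cos ((2 * k + 1) * δ / 2) ^ 2 / cos (δ / 2) ^ 2 := by
  rw [grovRatio, one_add_cos_eq_two_mul_cos_sq_half, one_add_cos_eq_two_mul_cos_sq_half,
    mul_div_mul_left _ _ two_ne_zero]

theorem grovRatio_pi_div : grovRatio k (π / (2 * k + 1)) = 0 := by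
  rw [grovRatio, mul_div_cancel₀ π (by positivity), cos_pi, add_neg_cancel, zero_div]

theorem continuousAt_grovRatio {δ : ℝ} (hδ : cos δ ≠ -1) :
    ContinuousAt (grovRatio k) δ := by
  unfold grovRatio
  exact ContinuousAt.div (by fun_prop) (by fun_prop) (by contrapose! hδ; linarith)

theorem grovRatio_strictMonoOn (hk : 2 ≤ k) :
    StrictMonoOn (grovRatio k) (Icc (π / (2 * k + 1)) (π / (2 * k - 1))) := by
  have hK : (2 : ℝ) ≤ k := by exact_mod_cast hk
  have hπ := pi_pos
  have hnum {δ : ℝ} (hδ : δ ∈ Icc (π / (2 * k + 1)) (π / (2 * k - 1))) :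
      (2 * k + 1) * δ / 2 ∈ Icc (π / 2) π := by
    have h₁ := (div_le_iff₀' (by positivity)).1 hδ.1
    have h₂ := (le_div_iff₀' (by linarith)).1 hδ.2
    constructor <;> nlinarith
  have hden {δ : ℝ} (hδ : δ ∈ Icc (π / (2 * k + 1)) (π / (2 * k - 1))) :
      δ / 2 ∈ Ico 0 (π / 2) := by
    have h₁ : 0 < π / (2 * k + 1) := by positivity
    have h₂ := (le_div_iff₀' (by linarith)).1 hδ.2
    constructor <;> nlinarith [hδ.1]
  intro δ₁ hδ₁ δ₂ hδ₂ hlt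
  have hN₁ : cos ((2 * k + 1) * δ₁ / 2) ≤ 0 :=
    cos_nonpos_of_pi_div_two_le_of_le (hnum hδ₁).1 (by linarith [(hnum hδ₁).2])
  have hN : cos ((2 * k + 1) * δ₂ / 2) < cos ((2 * k + 1) * δ₁ / 2) :=
    strictAntiOn_cos (Icc_subset_Icc_left (by linarith) (hnum hδ₁))
      (Icc_subset_Icc_left (by linarith) (hnum hδ₂)) (by nlinarith)
  have hD : cos (δ₂ / 2) < cos (δ₁ / 2) :=
    strictAntiOn_cos (Ico_subset_Icc_self.trans (Icc_subset_Icc_right (by linarith)) (hden hδ₁))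
      (Ico_subset_Icc_self.trans (Icc_subset_Icc_right (by linarith)) (hden hδ₂)) (by linarith)
  have hD₂ : 0 < cos (δ₂ / 2) :=
    cos_pos_of_mem_Ioo ⟨by linarith [(hden hδ₂).1], (hden hδ₂).2⟩
  rw [grovRatio_eq, grovRatio_eq]
  exact div_lt_div₀ (by nlinarith) (by nlinarith) (sq_nonneg _) (by positivity)

end Ratio

section Probability

variable {k : ℕ} {lam : ℝ}

theorem grovP_eq {φ : ℝ} (h0 : 0 < lam) (h1 : lam < 1) (hφ : cos φ ≠ 1) :
    grovP k φ lam = 1 - (1 - lam) * grovRatio k (grovDelta lam φ) := by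
  have hsinθ : sin (arcsin √lam) ^ 2 = lam := by
    rw [sin_arcsin (by linarith [sqrt_nonneg lam]) (sqrt_le_one.2 h1.le), sq_sqrt h0.le]
  have hcosδ := cos_grovDelta h0.le h1.le φ
  have hne₁ : 1 - cos (grovDelta lam φ) ≠ 0 := by
    rw [hcosδ]; nlinarith [lt_of_le_of_ne (cos_le_one φ) hφ]
  have hne₂ : 1 + cos (grovDelta lam φ) ≠ 0 := by
    linarith [neg_one_lt_cos_grovDelta h0.le h1 φ]
  have hcosφ : cos φ = 1 - (1 - cos (grovDelta lam φ)) / lam := by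
    rw [hcosδ]; field_simp; ring
  simp only [grovP, grovRatio]
  rw [hsinθ, ← grovDelta, sin_sq, hcosφ,
    show 1 - cos (grovDelta lam φ) ^ 2
      = (1 - cos (grovDelta lam φ)) * (1 + cos (grovDelta lam φ)) by ring]
  field_simp
  ring

theorem grovP_eqOn (h0 : 0 < lam) (h1 : lam < 1) :
    EqOn (fun φ => grovP k φ lam) (fun φ => 1 - (1 - lam) * grovRatio k (grovDelta lam φ))
      (Ioc 0 π) := fun φ hφ =>
  grovP_eq h0 h1 (by
    simpa using (strictAntiOn_cos ⟨le_rfl, pi_pos.le⟩ ⟨hφ.1.le, hφ.2⟩ hφ.1).ne)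

theorem grovP_strictAntiOn (hk : 2 ≤ k) (h0 : 0 < lam) (h1 : lam < 1) {φ₀ : ℝ}
    (hφ₀ : 0 ≤ φ₀) (hδ₀ : grovDelta lam φ₀ = π / (2 * k + 1))
    (hδπ : grovDelta lam π ≤ π / (2 * k - 1)) :
    StrictAntiOn (fun φ => grovP k φ lam) (Ioc φ₀ π) := by
  have hδ := (grovDelta_strictMonoOn h0 h1.le).mono (Icc_subset_Icc_left hφ₀)
  have hmaps : MapsTo (grovDelta lam) (Icc φ₀ π) (Icc (π / (2 * k + 1)) (π / (2 * k - 1))) :=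
    hδ₀ ▸ hδ.monotoneOn.mapsTo_Icc.mono_right (Icc_subset_Icc_right hδπ)
  have hmono : StrictMonoOn (fun φ => grovRatio k (grovDelta lam φ)) (Icc φ₀ π) :=
    (grovRatio_strictMonoOn hk).comp hδ hmaps
  intro φ₁ hφ₁ φ₂ hφ₂ hlt
  have hsub : Ioc φ₀ π ⊆ Ioc 0 π := Ioc_subset_Ioc_left hφ₀
  simp only [grovP_eqOn h0 h1 (hsub hφ₁), grovP_eqOn h0 h1 (hsub hφ₂)]
  nlinarith [hmono (Ioc_subset_Icc_self hφ₁) (Ioc_subset_Icc_self hφ₂) hlt]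

theorem tendsto_grovP_nhdsGT (h0 : 0 < lam) (h1 : lam < 1) {φ₀ : ℝ} (hφ₀ : 0 ≤ φ₀)
    (hφ₀π : φ₀ < π) (hδ₀ : grovDelta lam φ₀ = π / (2 * k + 1)) :
    Tendsto (fun φ => grovP k φ lam) (𝓝[>] φ₀) (𝓝 1) := by
  have hcont : ContinuousAt (fun φ => 1 - (1 - lam) * grovRatio k (grovDelta lam φ)) φ₀ :=
    continuousAt_const.sub <| continuousAt_const.mul <|
      (continuousAt_grovRatio (neg_one_lt_cos_grovDelta h0.le h1 φ₀).ne').comp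
        continuous_grovDelta.continuousAt
  have hval : 1 - (1 - lam) * grovRatio k (grovDelta lam φ₀) = 1 := by
    rw [hδ₀, grovRatio_pi_div, mul_zero, sub_zero]
  refine (hval ▸ hcont.tendsto.mono_left nhdsWithin_le_nhds).congr' ?_
  filter_upwards [Ioc_mem_nhdsGT hφ₀π] with φ hφ
  exact (grovP_eqOn h0 h1 (Ioc_subset_Ioc_left hφ₀ hφ)).symm

end Probability

theorem grovDelta_phiMin {k : ℕ} (hk : 2 ≤ k) :
    grovDelta (sin (π / (2 * k - 1) / 2) ^ 2) (phiMin k) = π / (2 * k + 1) := by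
  have hK : (2 : ℝ) ≤ k := by exact_mod_cast hk
  have hπ := pi_pos
  have hab : π / (2 * k + 1) ≤ π / (2 * k - 1) :=
    div_le_div_of_nonneg_left hπ.le (by linarith) (by linarith)
  have hb₀ : 0 < π / (2 * k - 1) := div_pos hπ (by linarith)
  have hbπ : π / (2 * k - 1) < π := div_lt_self hπ (by linarith)
  have hphiMin : phiMin k
      = arccos (1 - (1 - cos (π / (2 * k + 1))) / sin (π / (2 * k - 1) / 2) ^ 2) := by
    rw [phiMin, one_sub_cos_eq_two_mul_sin_sq_half (π / (2 * k - 1)),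
      ← mul_one_sub, mul_div_mul_left _ _ two_ne_zero]
  rw [hphiMin]
  refine grovDelta_arccos (sin_sq_half_mem_Ioo hb₀ hbπ).1 (by positivity) (hab.trans hbπ.le) ?_
  rw [← one_sub_cos_eq_two_mul_sin_sq_half]
  linarith [strictAntiOn_cos.antitoneOn ⟨by positivity, hab.trans hbπ.le⟩
    ⟨hb₀.le, hbπ.le⟩ hab]

end Grover

open Grover in
/-- For k ≥ 2 and λ₁ = sin²(π/(4k−2)), the function
φ ↦ P_k^φ(λ₁) is strictly decreasing on (φ_k^min, π], and P_k^φ(λ₁) → 1 as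
φ → φ_k^min from the right. -/
theorem right_endpoint_probability_decreasing_in_phase
    (k : ℕ) (hk : 2 ≤ k) (lam₁ : ℝ)
    (hlam₁ : lam₁ = Real.sin (Real.pi / (4 * (k : ℝ) - 2)) ^ 2) :
    StrictAntiOn (fun φ => grovP k φ lam₁) (Set.Ioc (phiMin k) Real.pi) ∧
      Filter.Tendsto (fun φ => grovP k φ lam₁) (nhdsWithin (phiMin k) (Set.Ioi (phiMin k)))
        (nhds 1) := by
  have hK : (2 : ℝ) ≤ k := by exact_mod_cast hk
  have hab : π / (2 * k + 1) < π / (2 * k - 1) :=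
    div_lt_div_of_pos_left pi_pos (by linarith) (by linarith)
  have hb₀ : 0 < π / (2 * k - 1) := div_pos pi_pos (by linarith)
  have hbπ : π / (2 * k - 1) < π := div_lt_self pi_pos (by linarith)
  have hlam : lam₁ = sin (π / (2 * k - 1) / 2) ^ 2 := by
    rw [hlam₁, div_div]; ring_nf
  obtain ⟨hlam₀, hlam₁'⟩ := hlam ▸ sin_sq_half_mem_Ioo hb₀ hbπ
  have hδπ : grovDelta lam₁ π = π / (2 * k - 1) :=
    hlam ▸ grovDelta_sin_sq_half_pi hb₀.le hbπ.le
  have hδmin : grovDelta lam₁ (phiMin k) = π / (2 * k + 1) := hlam ▸ grovDelta_phiMin hk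
  have hmin_lt : phiMin k < π :=
    (show phiMin k ≤ π from arccos_le_pi _).lt_of_ne fun h =>
      hab.ne (by rw [← hδmin, ← hδπ, h])
  exact ⟨grovP_strictAntiOn hk hlam₀ hlam₁' (arccos_nonneg _) hδmin hδπ.le,
    tendsto_grovP_nhdsGT hlam₀ hlam₁' (arccos_nonneg _) hmin_lt hδmin⟩
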